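/- (Weighted sum comparison) Let λ ∈ Γ_k^+ ⊂ ℝ^n, 2 ≤ l ≤ k ≤ n, and let a_1,…,a_{l-1} ≥ 0 and b_l,…,b_k ≥ 0 be real numbers, not all zero, such that ∑_{i=1}^{l-1} a_i H_i(λ) = ∑_{j=l}^{k} b_j H_j(λ) > 0. Then ∑_{j=l}^{k} b_j H_{j-1}(λ) ≥ ∑_{i=1}^{l-1} a_i H_{i-1}(λ), with equality only if λ = c(1,…,1). -/

import Mathlib

/-!
Newton's inequalities `H_{m-1} H_{m+1} ≤ H_m²` say that `ρ_m = H_{m-1} / H_m` is nondecreasing in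
`1 ≤ m ≤ k` on `Γ_k⁺`, strictly unless `λ` is constant. Writing `T` for the common value of the two
weighted sums, `∑ a_i H_{i-1} ≤ ρ_{l-1} T ≤ ρ_l T ≤ ∑ b_j H_{j-1}`.

Newton's inequality is proved by induction on the number `p` of variables. The roots of the
derivative of `∏ (X - λ_i)` are real by Rolle's theorem and have the same `H_0, …, H_{p-1}`, which
lowers `p` down to `m + 1`. There the reciprocals `1 / λ_i` have `H_1 = H_m / H_{m+1}` and
`H_2 = H_{m-1} / H_{m+1}`, so the inequality becomes `H_2 < H_1²`, i.e. strict Cauchy–Schwarz.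
-/

/-- The `k`-th elementary symmetric polynomial of `x ∈ ℝⁿ`. -/
noncomputable def sigmaE (n k : ℕ) (x : Fin n → ℝ) : ℝ :=
  ∑ s ∈ Finset.powersetCard k (Finset.univ : Finset (Fin n)), ∏ i ∈ s, x i

/-- The normalized `k`-th elementary symmetric polynomial `H_k = σ_k / C(n,k)`. -/
noncomputable def Hnorm (n k : ℕ) (x : Fin n → ℝ) : ℝ := sigmaE n k x / (n.choose k)

/-- The Gårding cone `Γ_k⁺ = {x : σ_i(x) > 0 for all 1 ≤ i ≤ k}`. -/
def GardingCone (n k : ℕ) : Set (Fin n → ℝ) :=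
  {x | ∀ i, 1 ≤ i → i ≤ k → 0 < sigmaE n i x}

open Finset Polynomial

lemma Finset.sum_sum_sub_sq {ι : Type*} (s : Finset ι) (f : ι → ℝ) :
    ∑ i ∈ s, ∑ j ∈ s, (f i - f j) ^ 2 = 2 * (#s * ∑ i ∈ s, f i ^ 2 - (∑ i ∈ s, f i) ^ 2) := by
  simp only [sub_sq, sum_add_distrib, sum_sub_distrib, sum_const, nsmul_eq_mul, ← mul_sum,
    ← sum_mul]
  ring

namespace Multiset

section CommSemiring

variable {R : Type*} [CommSemiring R]

lemma esymm_cons (a : R) (s : Multiset R) (k : ℕ) :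
    (a ::ₘ s).esymm (k + 1) = s.esymm (k + 1) + a * s.esymm k := by
  simp only [esymm, powersetCard_cons, map_add, sum_add, map_map, Function.comp_def, prod_cons,
    sum_map_mul_left]

lemma esymm_zero (s : Multiset R) : s.esymm 0 = 1 := by
  simp [esymm]

lemma esymm_card (s : Multiset R) : s.esymm (card s) = s.prod := by
  simp [esymm, powersetCard_self]

lemma esymm_one (s : Multiset R) : s.esymm 1 = s.sum := by
  simp [esymm, powersetCard_one]

lemma esymm_replicate (n k : ℕ) (c : R) : (replicate n c).esymm k = n.choose k * c ^ k := by
  induction n generalizing k with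
  | zero => cases k <;> simp [esymm, powersetCard_zero_right]
  | succ n ih =>
    cases k with
    | zero => simp [esymm_zero]
    | succ k =>
      rw [replicate_succ, esymm_cons, ih, ih, Nat.choose_succ_succ', pow_succ]
      push_cast
      ring

end CommSemiring

lemma two_mul_esymm_two {R : Type*} [CommRing R] (s : Multiset R) :
    2 * s.esymm 2 = s.sum ^ 2 - (s.map (· ^ 2)).sum := by
  induction s using Multiset.induction_on with
  | empty => simp [esymm, powersetCard_zero_right]
  | cons a s ih =>
    rw [esymm_cons, esymm_one, sum_cons, map_cons, sum_cons]
    linear_combination ih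

lemma esymm_map_inv_mul_prod {K : Type*} [Field K] (s : Multiset K) (hs : 0 ∉ s) {i j : ℕ}
    (hij : i + j = card s) : (s.map (·⁻¹)).esymm i * s.prod = s.esymm j := by
  induction s using Multiset.induction_on generalizing i j with
  | empty =>
    obtain ⟨rfl, rfl⟩ : i = 0 ∧ j = 0 := by simpa using hij
    simp [esymm_zero]
  | cons a s ih =>
    have ha : a ≠ 0 := fun h => hs (h ▸ mem_cons_self _ _)
    have hs' : 0 ∉ s := fun h => hs (mem_cons_of_mem h)
    rw [card_cons] at hij
    rcases i with _ | i
    · simp only [zero_add] at hij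
      subst hij
      rw [← card_cons a s, esymm_card, esymm_zero, one_mul]
    rcases j with _ | j
    · rw [add_zero] at hij
      rw [show i + 1 = card (s.map (·⁻¹) |>.cons a⁻¹) by simp [hij], ← map_cons, esymm_card,
        prod_map_inv, map_id', inv_mul_cancel₀ (prod_ne_zero hs), esymm_zero]
    rw [map_cons, esymm_cons, esymm_cons, prod_cons, ← ih hs' (by omega : i + (j + 1) = card s),
      ← ih hs' (by omega : i + 1 + j = card s)]
    field_simp
    ring

lemma two_le_card_of_ne {α : Type*} {s : Multiset α} {a b : α} (ha : a ∈ s) (hb : b ∈ s)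
    (hab : a ≠ b) : 2 ≤ card s := by
  classical
  rw [← cons_erase ha, card_cons]
  have := card_pos_iff_exists_mem.2 ⟨b, (mem_erase_of_ne hab.symm).2 hb⟩
  omega

lemma sq_sum_lt_card_mul_sum_sq (s : Multiset ℝ) (h : ∃ a ∈ s, ∃ b ∈ s, a ≠ b) :
    s.sum ^ 2 < card s * (s.map (· ^ 2)).sum := by
  obtain ⟨a, ha, b, hb, hab⟩ := h
  rw [← s.map_univ_coe] at ha hb ⊢
  obtain ⟨i, -, rfl⟩ := mem_map.1 ha
  obtain ⟨j, -, rfl⟩ := mem_map.1 hb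
  have hpos : 0 < ∑ i' : s, ∑ j' : s, ((i' : ℝ) - j') ^ 2 :=
    sum_pos' (fun _ _ => by positivity)
      ⟨i, mem_univ _, sum_pos' (fun _ _ => by positivity)
        ⟨j, mem_univ _, by simpa [sq_pos_iff, sub_ne_zero] using hab⟩⟩
  rw [sum_sum_sub_sq] at hpos
  simp only [map_map, Function.comp_def, card_map]
  change (∑ i' : s, (i' : ℝ)) ^ 2 < ((#(univ : Finset s) : ℕ) : ℝ) * ∑ i' : s, (i' : ℝ) ^ 2
  linarith

noncomputable def normEsymm (s : Multiset ℝ) (k : ℕ) : ℝ := s.esymm k / (card s).choose k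

lemma normEsymm_replicate {n k : ℕ} (hk : k ≤ n) (c : ℝ) :
    (replicate n c).normEsymm k = c ^ k := by
  have : ((n.choose k : ℕ) : ℝ) ≠ 0 := by exact_mod_cast (Nat.choose_pos hk).ne'
  rw [normEsymm, esymm_replicate, card_replicate]
  field_simp

lemma normEsymm_card (s : Multiset ℝ) : s.normEsymm (card s) = s.prod := by
  simp [normEsymm, esymm_card]

lemma normEsymm_two_lt_sq (s : Multiset ℝ) (h : ∃ a ∈ s, ∃ b ∈ s, a ≠ b) :
    s.normEsymm 2 < s.normEsymm 1 ^ 2 := by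
  obtain ⟨a, ha, b, hb, hab⟩ := h
  have hp : (2 : ℝ) ≤ card s := by exact_mod_cast two_le_card_of_ne ha hb hab
  have hvar := sq_sum_lt_card_mul_sum_sq s ⟨a, ha, b, hb, hab⟩
  have he2 := two_mul_esymm_two s
  rw [normEsymm, normEsymm, Nat.cast_choose_two, Nat.choose_one_right, esymm_one, div_pow,
    div_lt_div_iff₀ (by nlinarith) (by positivity)]
  nlinarith

lemma exists_ne_of_normEsymm_two_lt_sq {s : Multiset ℝ} (hs : 2 ≤ card s)
    (h : s.normEsymm 2 < s.normEsymm 1 ^ 2) : ∃ a ∈ s, ∃ b ∈ s, a ≠ b := by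
  by_contra! hc
  obtain ⟨a, ha⟩ := card_pos_iff_exists_mem.1 (by omega : 0 < card s)
  rw [eq_replicate.2 ⟨rfl, fun b hb => hc b hb a ha⟩, normEsymm_replicate hs,
    normEsymm_replicate (by omega), pow_one] at h
  exact lt_irrefl _ h

lemma normEsymm_map_inv {s : Multiset ℝ} (hs : 0 ∉ s) {i j : ℕ} (hij : i + j = card s) :
    (s.map (·⁻¹)).normEsymm i = s.normEsymm j / s.normEsymm (card s) := by
  have hprod : s.prod ≠ 0 := prod_ne_zero hs
  rw [normEsymm_card, normEsymm, normEsymm, card_map, ← esymm_map_inv_mul_prod s hs hij, ← hij,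
    Nat.choose_symm_add]
  field_simp

lemma exists_normEsymm_eq_of_card_eq_succ {n : ℕ} (s : Multiset ℝ) (hs : card s = n + 1) :
    ∃ t : Multiset ℝ, card t = n ∧ ∀ j ≤ n, t.normEsymm j = s.normEsymm j := by
  set f := (s.map fun r => X - C r).prod
  have hfdeg : f.natDegree = n + 1 := by
    rw [natDegree_multiset_prod_X_sub_C_eq_card, hs]
  have hfcoeff : ∀ j ≤ n + 1, f.coeff (n + 1 - j) = (-1) ^ j * s.esymm j := by
    intro j hj
    rw [prod_X_sub_C_coeff s (by omega), hs, Nat.sub_sub_self hj]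
  set g := derivative f
  have hcard : card g.roots = n := by
    have h1 : card f.roots ≤ card g.roots + 1 := card_roots_le_derivative f
    have h2 : card g.roots ≤ f.natDegree - 1 := (card_roots' g).trans (natDegree_derivative_le f)
    rw [roots_multiset_prod_X_sub_C, hs] at h1
    omega
  have hgdeg : g.natDegree = n := by
    have h1 : card g.roots ≤ g.natDegree := card_roots' g
    have h2 : g.natDegree ≤ f.natDegree - 1 := natDegree_derivative_le f
    omega
  refine ⟨g.roots, hcard, fun j hj => ?_⟩
  have hvieta := coeff_eq_esymm_roots_of_card (hcard.trans hgdeg.symm) (k := n - j) (by omega)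
  have hlead : f.coeff (n + 1) = 1 := by simpa [esymm_zero] using hfcoeff 0 (Nat.zero_le _)
  rw [hgdeg, Nat.sub_sub_self hj, leadingCoeff, hgdeg, coeff_derivative, coeff_derivative,
    show n - j + 1 = n + 1 - j by omega, hfcoeff j (by omega), hlead] at hvieta
  have hroots : (n + 1 : ℝ) * g.roots.esymm j = ((n - j : ℕ) + 1) * s.esymm j := by
    refine mul_left_cancel₀ (pow_ne_zero j (neg_ne_zero.2 one_ne_zero)) ?_
    linear_combination -hvieta
  have hchoose : (n.choose j : ℝ) * (n + 1) = ((n + 1).choose j : ℝ) * ((n - j : ℕ) + 1) := by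
    exact_mod_cast (show n + 1 - j = n - j + 1 by omega) ▸ Nat.choose_mul_succ_eq n j
  have hpos : ∀ m, j ≤ m → ((m.choose j : ℕ) : ℝ) ≠ 0 := fun m hm => by
    exact_mod_cast (Nat.choose_pos hm).ne'
  rw [normEsymm, normEsymm, hcard, hs, div_eq_div_iff (hpos n hj) (hpos (n + 1) (by omega))]
  refine mul_right_cancel₀ (show ((n - j : ℕ) + 1 : ℝ) ≠ 0 by positivity) ?_
  linear_combination (n.choose j : ℝ) * hroots - g.roots.esymm j * hchoose

lemma normEsymm_mul_lt_sq_of_card_eq {s : Multiset ℝ} {m : ℕ} (hm : 1 ≤ m)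
    (hs : card s = m + 1) (h0 : s.normEsymm (m + 1) ≠ 0) (hne : ∃ a ∈ s, ∃ b ∈ s, a ≠ b) :
    s.normEsymm (m - 1) * s.normEsymm (m + 1) < s.normEsymm m ^ 2 := by
  have hs0 : 0 ∉ s := fun h => h0 (by rw [← hs, normEsymm_card, prod_eq_zero h])
  have hinv : ∃ a ∈ s.map (·⁻¹), ∃ b ∈ s.map (·⁻¹), a ≠ b := by
    obtain ⟨a, ha, b, hb, hab⟩ := hne
    exact ⟨a⁻¹, mem_map_of_mem _ ha, b⁻¹, mem_map_of_mem _ hb, inv_injective.ne hab⟩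
  have key := normEsymm_two_lt_sq _ hinv
  rw [normEsymm_map_inv hs0 (j := m - 1) (by omega), normEsymm_map_inv hs0 (j := m) (by omega),
    hs] at key
  calc s.normEsymm (m - 1) * s.normEsymm (m + 1)
      = s.normEsymm (m - 1) / s.normEsymm (m + 1) * s.normEsymm (m + 1) ^ 2 := by field_simp
    _ < (s.normEsymm m / s.normEsymm (m + 1)) ^ 2 * s.normEsymm (m + 1) ^ 2 := by gcongr
    _ = s.normEsymm m ^ 2 := by field_simp

theorem normEsymm_mul_lt_sq {s : Multiset ℝ} {m : ℕ} (hm : 1 ≤ m) (hs : m + 1 ≤ card s)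
    (h0 : s.normEsymm (m + 1) ≠ 0) (hne : ∃ a ∈ s, ∃ b ∈ s, a ≠ b) :
    s.normEsymm (m - 1) * s.normEsymm (m + 1) < s.normEsymm m ^ 2 := by
  obtain ⟨p, hp⟩ : ∃ p, card s = p := ⟨_, rfl⟩
  rw [hp] at hs
  induction p, hs using Nat.le_induction generalizing s with
  | base => exact normEsymm_mul_lt_sq_of_card_eq hm hp h0 hne
  | succ p hmp ih =>
    obtain ⟨t, ht, heq⟩ := exists_normEsymm_eq_of_card_eq_succ s hp
    have hvar : t.normEsymm 2 < t.normEsymm 1 ^ 2 := by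
      rw [heq 2 (by omega), heq 1 (by omega)]
      exact normEsymm_two_lt_sq s hne
    rw [← heq (m - 1) (by omega), ← heq m (by omega), ← heq (m + 1) hmp]
    exact ih (by rwa [heq (m + 1) hmp])
      (exists_ne_of_normEsymm_two_lt_sq (by omega) hvar) ht

lemma normEsymm_mul_le_sq {s : Multiset ℝ} {m : ℕ} (hm : 1 ≤ m) (hs : m + 1 ≤ card s)
    (h0 : s.normEsymm (m + 1) ≠ 0) :
    s.normEsymm (m - 1) * s.normEsymm (m + 1) ≤ s.normEsymm m ^ 2 := by
  by_cases hne : ∃ a ∈ s, ∃ b ∈ s, a ≠ b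
  · exact (normEsymm_mul_lt_sq hm hs h0 hne).le
  push Not at hne
  obtain ⟨a, ha⟩ := card_pos_iff_exists_mem.1 (by omega : 0 < card s)
  rw [eq_replicate.2 ⟨rfl, fun b hb => hne b hb a ha⟩, normEsymm_replicate (by omega),
    normEsymm_replicate (by omega), normEsymm_replicate (by omega), ← pow_add, ← pow_mul]
  exact le_of_eq (congrArg _ (by omega))

end Multiset

lemma Hnorm_eq_normEsymm (n k : ℕ) (x : Fin n → ℝ) :
    Hnorm n k x = (univ.val.map x).normEsymm k := by
  rw [Multiset.normEsymm, Finset.esymm_map_val, Multiset.card_map, card_val, card_univ,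
    Fintype.card_fin]
  rfl

lemma Hnorm_pos {n k t : ℕ} {x : Fin n → ℝ} (hx : x ∈ GardingCone n k) (hkn : k ≤ n)
    (ht : t ≤ k) : 0 < Hnorm n t x := by
  rcases Nat.eq_zero_or_pos t with rfl | ht1
  · simp [Hnorm, sigmaE]
  · exact div_pos (hx t ht1 ht) (by exact_mod_cast Nat.choose_pos (ht.trans hkn))

lemma Hnorm_mul_le_sq {n k m : ℕ} {x : Fin n → ℝ} (hx : x ∈ GardingCone n k) (hkn : k ≤ n)
    (hm : 1 ≤ m) (hmk : m + 1 ≤ k) :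
    Hnorm n (m - 1) x * Hnorm n (m + 1) x ≤ Hnorm n m x ^ 2 := by
  have h0 := (Hnorm_pos hx hkn hmk).ne'
  simp only [Hnorm_eq_normEsymm] at h0 ⊢
  exact Multiset.normEsymm_mul_le_sq hm (by simpa using hmk.trans hkn) h0

lemma Hnorm_mul_lt_sq {n k m : ℕ} {x : Fin n → ℝ} (hx : x ∈ GardingCone n k) (hkn : k ≤ n)
    (hm : 1 ≤ m) (hmk : m + 1 ≤ k) (hne : ∃ p q, x p ≠ x q) :
    Hnorm n (m - 1) x * Hnorm n (m + 1) x < Hnorm n m x ^ 2 := by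
  have h0 := (Hnorm_pos hx hkn hmk).ne'
  obtain ⟨p, q, hpq⟩ := hne
  simp only [Hnorm_eq_normEsymm] at h0 ⊢
  exact Multiset.normEsymm_mul_lt_sq hm (by simpa using hmk.trans hkn) h0
    ⟨x p, Multiset.mem_map_of_mem _ (mem_univ p), x q, Multiset.mem_map_of_mem _ (mem_univ q), hpq⟩

section LogConcave

variable {h : ℕ → ℝ} {k : ℕ}

lemma monotoneOn_div_of_mul_le_sq (hpos : ∀ t ≤ k, 0 < h t)
    (hlc : ∀ m, 1 ≤ m → m + 1 ≤ k → h (m - 1) * h (m + 1) ≤ h m ^ 2) :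
    MonotoneOn (fun m => h (m - 1) / h m) (Set.Icc 1 k) := by
  refine monotoneOn_of_le_add_one Set.ordConnected_Icc fun m _ hm hm1 => ?_
  rw [Nat.add_sub_cancel, div_le_div_iff₀ (hpos m hm.2) (hpos _ hm1.2), ← sq]
  exact hlc m hm.1 hm1.2

lemma strictMonoOn_div_of_mul_lt_sq (hpos : ∀ t ≤ k, 0 < h t)
    (hlc : ∀ m, 1 ≤ m → m + 1 ≤ k → h (m - 1) * h (m + 1) < h m ^ 2) :
    StrictMonoOn (fun m => h (m - 1) / h m) (Set.Icc 1 k) := by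
  refine strictMonoOn_of_lt_add_one Set.ordConnected_Icc fun m _ hm hm1 => ?_
  rw [Nat.add_sub_cancel, div_lt_div_iff₀ (hpos m hm.2) (hpos _ hm1.2), ← sq]
  exact hlc m hm.1 hm1.2

end LogConcave

section WeightedSum

variable {ι : Type*} {s : Finset ι} {a g h : ι → ℝ} {c : ℝ}

lemma sum_mul_le_mul_sum_of_div_le (ha : ∀ i ∈ s, 0 ≤ a i) (hh : ∀ i ∈ s, 0 < h i)
    (hc : ∀ i ∈ s, g i / h i ≤ c) : ∑ i ∈ s, a i * g i ≤ c * ∑ i ∈ s, a i * h i := by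
  rw [mul_sum]
  refine sum_le_sum fun i hi => ?_
  have := mul_le_mul_of_nonneg_left ((div_le_iff₀ (hh i hi)).1 (hc i hi)) (ha i hi)
  linarith

lemma mul_sum_le_sum_mul_of_le_div (ha : ∀ i ∈ s, 0 ≤ a i) (hh : ∀ i ∈ s, 0 < h i)
    (hc : ∀ i ∈ s, c ≤ g i / h i) : c * ∑ i ∈ s, a i * h i ≤ ∑ i ∈ s, a i * g i := by
  rw [mul_sum]
  refine sum_le_sum fun i hi => ?_
  have := mul_le_mul_of_nonneg_left ((le_div_iff₀ (hh i hi)).1 (hc i hi)) (ha i hi)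
  linarith

end WeightedSum

theorem stmt17_general (n k l : ℕ) (hl : 2 ≤ l) (hlk : l ≤ k) (hkn : k ≤ n)
    (x : Fin n → ℝ) (hx : x ∈ GardingCone n k)
    (a b : ℕ → ℝ) (ha : ∀ i, 0 ≤ a i) (hb : ∀ j, 0 ≤ b j)
    (heq : ∑ i ∈ Finset.Icc 1 (l-1), a i * Hnorm n i x
      = ∑ j ∈ Finset.Icc l k, b j * Hnorm n j x)
    (hpos : 0 < ∑ j ∈ Finset.Icc l k, b j * Hnorm n j x) :
    ∑ j ∈ Finset.Icc l k, b j * Hnorm n (j-1) x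
      ≥ ∑ i ∈ Finset.Icc 1 (l-1), a i * Hnorm n (i-1) x ∧
    (∑ j ∈ Finset.Icc l k, b j * Hnorm n (j-1) x
        = ∑ i ∈ Finset.Icc 1 (l-1), a i * Hnorm n (i-1) x →
      ∃ c : ℝ, ∀ p, x p = c) := by
  have hH : ∀ t ≤ k, 0 < Hnorm n t x := fun t ht => Hnorm_pos hx hkn ht
  set ρ : ℕ → ℝ := fun m => Hnorm n (m - 1) x / Hnorm n m x
  have hmono : MonotoneOn ρ (Set.Icc 1 k) :=
    monotoneOn_div_of_mul_le_sq hH fun m hm hmk => Hnorm_mul_le_sq hx hkn hm hmk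
  have hl1mem : l - 1 ∈ Set.Icc 1 k := ⟨by omega, by omega⟩
  have hlmem : l ∈ Set.Icc 1 k := ⟨by omega, hlk⟩
  have hA : ∑ i ∈ Icc 1 (l - 1), a i * Hnorm n (i - 1) x
      ≤ ρ (l - 1) * ∑ j ∈ Icc l k, b j * Hnorm n j x := by
    rw [← heq]
    refine sum_mul_le_mul_sum_of_div_le (fun i _ => ha i) (fun i hi => hH i ?_) fun i hi => ?_ <;>
      rw [mem_Icc] at hi
    exacts [by omega, hmono ⟨hi.1, by omega⟩ hl1mem hi.2]
  have hB : ρ l * ∑ j ∈ Icc l k, b j * Hnorm n j x ≤ ∑ j ∈ Icc l k, b j * Hnorm n (j - 1) x := by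
    refine mul_sum_le_sum_mul_of_le_div (fun j _ => hb j) (fun j hj => hH j ?_) fun j hj => ?_ <;>
      rw [mem_Icc] at hj
    exacts [hj.2, hmono hlmem ⟨by omega, hj.2⟩ hj.1]
  refine ⟨hA.trans ((mul_le_mul_of_nonneg_right (hmono hl1mem hlmem (by omega)) hpos.le).trans hB),
    fun hequal => ?_⟩
  by_contra! hconst
  obtain ⟨p, -⟩ := hconst 0
  obtain ⟨q, hq⟩ := hconst (x p)
  have hstrict : StrictMonoOn ρ (Set.Icc 1 k) := strictMonoOn_div_of_mul_lt_sq hH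
    fun m hm hmk => Hnorm_mul_lt_sq hx hkn hm hmk ⟨q, p, hq⟩
  have := mul_lt_mul_of_pos_right (hstrict hl1mem hlmem (by omega)) hpos
  linarith

/-- Weighted sum comparison: let `λ ∈ Γ_k⁺`, `2 ≤ l ≤ k ≤ n`, and let
`a_1,…,a_{l-1} ≥ 0`, `b_l,…,b_k ≥ 0`, not all zero, with
`∑_{i=1}^{l-1} a_i H_i(λ) = ∑_{j=l}^{k} b_j H_j(λ) > 0`. Then
`∑_{j=l}^{k} b_j H_{j-1}(λ) ≥ ∑_{i=1}^{l-1} a_i H_{i-1}(λ)`, with equality only if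
`λ = c(1,…,1)`. -/
theorem stmt17 (n k l : ℕ) (hl : 2 ≤ l) (hlk : l ≤ k) (hkn : k ≤ n)
    (x : Fin n → ℝ) (hx : x ∈ GardingCone n k)
    (a b : ℕ → ℝ) (ha : ∀ i, 0 ≤ a i) (hb : ∀ j, 0 ≤ b j)
    (hne : (∃ i ∈ Finset.Icc 1 (l-1), a i ≠ 0) ∨ ∃ j ∈ Finset.Icc l k, b j ≠ 0)
    (heq : ∑ i ∈ Finset.Icc 1 (l-1), a i * Hnorm n i x
      = ∑ j ∈ Finset.Icc l k, b j * Hnorm n j x)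
    (hpos : 0 < ∑ j ∈ Finset.Icc l k, b j * Hnorm n j x) :
    ∑ j ∈ Finset.Icc l k, b j * Hnorm n (j-1) x
      ≥ ∑ i ∈ Finset.Icc 1 (l-1), a i * Hnorm n (i-1) x ∧
    (∑ j ∈ Finset.Icc l k, b j * Hnorm n (j-1) x
        = ∑ i ∈ Finset.Icc 1 (l-1), a i * Hnorm n (i-1) x →
      ∃ c : ℝ, ∀ p, x p = c) :=
  stmt17_general n k l hl hlk hkn x hx a b ha hb heq hpos
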